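/- Let M be a 4×4 real matrix with Mᵀ · J · M = J. Suppose D := 2·Tr(M²) − (Tr M)² + 8 > 0 and that K₊ := (Tr M + √D)/2 satisfies −2 < K₊ < 2. Then M has a non-real complex eigenvalue of modulus 1; in particular the symplectic period map M has (at least) two eigenvalues on the unit circle. -/

import Mathlib

/-!
Symplecticity gives `det M = 1` and `M⁻¹ = -J Mᵀ J`, hence `Tr M⁻¹ = Tr M`, so the characteristic
polynomial is palindromic: `z⁴ - a z³ + b z² - a z + 1` with `a = Tr M`, `b = (a² - Tr M²) / 2`.
It factors as `(z² - K₊ z + 1)(z² - K₋ z + 1)`, where `K±` are the roots of `K² - a K + b - 2`,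
whose discriminant is `D`. When `|K₊| < 2` the roots `(K₊ ± i √(4 - K₊²)) / 2` of the first factor
are non-real and lie on the unit circle.
-/

open Matrix

/-- The canonical 4×4 symplectic matrix `J = fromBlocks 0 1 (-1) 0`. -/
noncomputable def Jmat : Matrix (Fin 4) (Fin 4) ℝ :=
  Matrix.reindex finSumFinEquiv finSumFinEquiv
    (Matrix.fromBlocks (0 : Matrix (Fin 2) (Fin 2) ℝ) (1 : Matrix (Fin 2) (Fin 2) ℝ)
      (-1 : Matrix (Fin 2) (Fin 2) ℝ) (0 : Matrix (Fin 2) (Fin 2) ℝ))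

open ComplexConjugate

theorem Matrix.det_sub_smul_one_fin_four {K : Type*} [Field K] [CharZero K]
    (A : Matrix (Fin 4) (Fin 4) K) (z : K) :
    (A - z • 1).det = z ^ 4 - A.trace * z ^ 3 + (A.trace ^ 2 - (A * A).trace) / 2 * z ^ 2
      - A.adjugate.trace * z + A.det := by
  simp [det_succ_row_zero, Fin.sum_univ_succ, adjugate_fin_succ_eq_det_submatrix,
    trace, Fin.succAbove, Matrix.mul_apply, Matrix.one_apply]
  ring

lemma Jmat_eq_reindex_neg_J : Jmat = reindex finSumFinEquiv finSumFinEquiv (-J (Fin 2) ℝ) := by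
  simp [Jmat, J, fromBlocks_neg]

lemma Jmat_mul_self : Jmat * Jmat = -1 := by
  rw [Jmat_eq_reindex_neg_J, ← coe_reindexAlgEquiv ℝ ℝ, ← map_mul, neg_mul_neg, J_squared, map_neg,
    map_one]

lemma reindex_mem_symplecticGroup {M : Matrix (Fin 4) (Fin 4) ℝ} (hM : Mᵀ * Jmat * M = Jmat) :
    reindex finSumFinEquiv.symm finSumFinEquiv.symm M ∈ symplecticGroup (Fin 2) ℝ := by
  rw [SymplecticGroup.mem_iff']
  have := congrArg (reindexAlgEquiv ℝ ℝ (finSumFinEquiv (m := 2) (n := 2)).symm) hM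
  rw [Jmat_eq_reindex_neg_J] at this
  simpa [map_mul, transpose_reindex] using this

lemma det_eq_one_of_symplectic {M : Matrix (Fin 4) (Fin 4) ℝ} (hM : Mᵀ * Jmat * M = Jmat) :
    M.det = 1 := by
  rw [← det_reindex_self (finSumFinEquiv (m := 2) (n := 2)).symm M]
  exact SymplecticGroup.det_eq_one (reindex_mem_symplecticGroup hM)

lemma inv_eq_of_symplectic {M : Matrix (Fin 4) (Fin 4) ℝ} (hM : Mᵀ * Jmat * M = Jmat) :
    M⁻¹ = -(Jmat * Mᵀ * Jmat) :=
  inv_eq_left_inv <| by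
    rw [neg_mul, mul_assoc, mul_assoc, ← mul_assoc Mᵀ, hM, Jmat_mul_self, neg_neg]

lemma trace_adjugate_eq_trace_of_symplectic {M : Matrix (Fin 4) (Fin 4) ℝ}
    (hM : Mᵀ * Jmat * M = Jmat) : M.adjugate.trace = M.trace := by
  have hinv : M.adjugate = M⁻¹ := by
    rw [inv_def, det_eq_one_of_symplectic hM, Ring.inverse_one, one_smul]
  rw [hinv, inv_eq_of_symplectic hM, trace_neg, trace_mul_cycle, Jmat_mul_self, neg_mul, one_mul,
    trace_neg, neg_neg, trace_transpose]

lemma det_map_ofReal_sub_smul_one_of_symplectic {M : Matrix (Fin 4) (Fin 4) ℝ}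
    (hM : Mᵀ * Jmat * M = Jmat) (z : ℂ) :
    (M.map Complex.ofReal - z • 1).det =
      z ^ 4 - M.trace * z ^ 3 + ((M.trace ^ 2 - (M * M).trace) / 2 : ℝ) * z ^ 2
        - M.trace * z + 1 := by
  have hmap : M.map Complex.ofReal = Complex.ofRealHom.mapMatrix M := rfl
  have htrace (A : Matrix (Fin 4) (Fin 4) ℝ) : (Complex.ofRealHom.mapMatrix A).trace = A.trace :=
    (AddMonoidHom.map_trace Complex.ofRealHom.toAddMonoidHom A).symm
  rw [det_sub_smul_one_fin_four, hmap, ← map_mul, ← RingHom.map_adjugate, ← RingHom.map_det,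
    htrace, htrace, htrace, trace_adjugate_eq_trace_of_symplectic hM, det_eq_one_of_symplectic hM,
    map_one]
  push_cast
  ring

lemma palindromic_quartic_eq_mul {R : Type*} [CommRing R] {a b k : R}
    (hk : k ^ 2 - a * k + b - 2 = 0) (z : R) :
    z ^ 4 - a * z ^ 3 + b * z ^ 2 - a * z + 1 =
      (z ^ 2 - k * z + 1) * (z ^ 2 - (a - k) * z + 1) := by
  linear_combination z ^ 2 * hk

lemma floquet_quadratic_eq_zero {a t : ℝ} (hD : 0 ≤ 2 * t - a ^ 2 + 8) :
    ((a + √(2 * t - a ^ 2 + 8)) / 2) ^ 2 - a * ((a + √(2 * t - a ^ 2 + 8)) / 2)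
      + (a ^ 2 - t) / 2 - 2 = 0 := by
  linear_combination (1 / 4 : ℝ) * Real.sq_sqrt hD

lemma exists_unit_circle_root {k : ℝ} (hk : |k| < 2) :
    ∃ z : ℂ, 0 < z.im ∧ ‖z‖ = 1 ∧ z ^ 2 - k * z + 1 = 0 := by
  obtain ⟨u, hu_pos, hu_sq⟩ : ∃ u : ℝ, 0 < u ∧ u ^ 2 = 4 - k ^ 2 := by
    have hpos : 0 < 4 - k ^ 2 := by nlinarith [abs_lt.1 hk]
    exact ⟨√(4 - k ^ 2), Real.sqrt_pos.2 hpos, Real.sq_sqrt hpos.le⟩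
  refine ⟨⟨k / 2, u / 2⟩, half_pos hu_pos, ?_, ?_⟩
  · rw [Complex.norm_def, Complex.normSq_mk, Real.sqrt_eq_one]
    linear_combination hu_sq / 4
  · apply Complex.ext
    · simp only [sq, Complex.add_re, Complex.sub_re, Complex.mul_re, Complex.ofReal_re,
        Complex.ofReal_im, zero_mul, sub_zero, Complex.one_re, Complex.zero_re]
      linear_combination -hu_sq / 4
    · simp only [sq, Complex.add_im, Complex.sub_im, Complex.mul_im, Complex.ofReal_re,
        Complex.ofReal_im, zero_mul, add_zero, Complex.one_im, Complex.zero_im]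
      ring

/-- If the Floquet discriminant `K₊ = (Tr M + √(2Tr M² − (Tr M)² + 8))/2` of a
4×4 symplectic period map `M` lies in `(−2, 2)` (with the discriminant
`D = 2Tr M² − (Tr M)² + 8 > 0`), then `M` has a non-real complex eigenvalue of
modulus 1; in particular `M` has two eigenvalues on the unit circle. -/
theorem symplectic_eigenvalues_on_unit_circle
    (M : Matrix (Fin 4) (Fin 4) ℝ) (hM : Mᵀ * Jmat * M = Jmat)
    (hD : 0 < 2 * (M * M).trace - M.trace ^ 2 + 8)
    (hK1 : -2 < (M.trace + Real.sqrt (2 * (M * M).trace - M.trace ^ 2 + 8)) / 2)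
    (hK2 : (M.trace + Real.sqrt (2 * (M * M).trace - M.trace ^ 2 + 8)) / 2 < 2) :
    ∃ z₁ z₂ : ℂ, z₁ ≠ z₂ ∧ z₁.im ≠ 0 ∧ z₂.im ≠ 0 ∧
      ‖z₁‖ = 1 ∧ ‖z₂‖ = 1 ∧
      (M.map Complex.ofReal - z₁ • (1 : Matrix (Fin 4) (Fin 4) ℂ)).det = 0 ∧
      (M.map Complex.ofReal - z₂ • (1 : Matrix (Fin 4) (Fin 4) ℂ)).det = 0 := by
  set k := (M.trace + √(2 * (M * M).trace - M.trace ^ 2 + 8)) / 2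
  have hk : (k : ℂ) ^ 2 - M.trace * k + ((M.trace ^ 2 - (M * M).trace) / 2 : ℝ) - 2 = 0 := by
    exact_mod_cast floquet_quadratic_eq_zero hD.le
  have hroot (w : ℂ) (hw : w ^ 2 - k * w + 1 = 0) :
      (M.map Complex.ofReal - w • (1 : Matrix (Fin 4) (Fin 4) ℂ)).det = 0 := by
    rw [det_map_ofReal_sub_smul_one_of_symplectic hM, palindromic_quartic_eq_mul hk, hw, zero_mul]
  obtain ⟨z, hz_im, hz_norm, hz⟩ := exists_unit_circle_root (abs_lt.2 ⟨hK1, hK2⟩)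
  have hz_conj : conj z ^ 2 - k * conj z + 1 = 0 := by simpa using congrArg conj hz
  refine ⟨z, conj z, fun h => hz_im.ne' (Complex.conj_eq_iff_im.1 h.symm), hz_im.ne',
    by simpa using hz_im.ne', hz_norm, by simpa using hz_norm, hroot z hz, hroot _ hz_conj⟩
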